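/- arXiv:1402.4462 — 4 statements merged into one kernel-verified Lean document; each statement's English description precedes it below -/
import Mathlib

section
/- For all integers k > r ≥ 2 and real x ∈ [0,1], g_r^r(x) - g_k^r(x) = ∑_{i=r}^{k-1} C(i, r-1) x^{i-r} (1-x)^r. -/
/-! The sum telescopes in `k`: the single step `g_m^r(x) - g_{m+1}^r(x)` is exactly `C(m, r-1) x^{m-r} (1-x)^r`,
the `m`-th summand. -/

/-- `g_k^r(x) = ∑_{i=0}^{r-1} C(k,i) x^{k-i-1} (1-x)^i`. -/
noncomputable def gfun (k r : ℕ) (x : ℝ) : ℝ :=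
  ∑ i ∈ Finset.range r, (k.choose i : ℝ) * x ^ (k - i - 1) * (1 - x) ^ i

lemma gfun_succ (k r : ℕ) (x : ℝ) :
    gfun k (r + 1) x = gfun k r x + k.choose r * x ^ (k - r - 1) * (1 - x) ^ r :=
  Finset.sum_range_succ _ _

/-- Induction on `s`: raising `s` adds one term to each side, and by Pascal's rule
`C(m+1, s) = C(m, s) + C(m, s-1)` the new terms combine with the old right-hand side into the new one. -/
lemma gfun_sub_gfun_succ {m s : ℕ} (hs : s < m) (x : ℝ) :
    gfun m (s + 1) x - gfun (m + 1) (s + 1) x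
      = m.choose s * x ^ (m - (s + 1)) * (1 - x) ^ (s + 1) := by
  induction s with
  | zero =>
    obtain ⟨n, rfl⟩ : ∃ n, m = n + 1 := ⟨m - 1, by omega⟩
    rw [gfun_succ, gfun_succ]
    simp only [gfun, Finset.sum_range_zero, Nat.choose_zero_right, Nat.cast_one, tsub_zero,
      add_tsub_cancel_right, pow_zero, pow_succ]
    ring
  | succ s ih =>
    obtain ⟨n, rfl⟩ : ∃ n, m = s + 2 + n := ⟨m - (s + 2), by omega⟩
    have hexp₁ : s + 2 + n - (s + 1) = n + 1 := by omega
    have hexp₂ : s + 2 + n - (s + 1) - 1 = n := by omega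
    have hexp₃ : s + 2 + n + 1 - (s + 1) - 1 = n + 1 := by omega
    have hexp₄ : s + 2 + n - (s + 1 + 1) = n := by omega
    have ih' := ih (by omega)
    rw [hexp₁] at ih'
    rw [gfun_succ, gfun_succ (s + 2 + n + 1), Nat.choose_succ_succ, Nat.cast_add,
      hexp₂, hexp₃, hexp₄]
    linear_combination ih'

theorem stmt_1_general (r k : ℕ) (hr : 2 ≤ r) (hk : r < k) (x : ℝ) :
    gfun r r x - gfun k r x
      = ∑ i ∈ Finset.Ico r k, (i.choose (r - 1) : ℝ) * x ^ (i - r) * (1 - x) ^ r := by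
  obtain ⟨s, rfl⟩ : ∃ s, r = s + 1 := ⟨r - 1, by omega⟩
  rw [← neg_sub, ← Finset.sum_Ico_sub (fun i => gfun i (s + 1) x) hk.le,
    ← Finset.sum_neg_distrib]
  refine Finset.sum_congr rfl fun i hi => ?_
  rw [neg_sub, gfun_sub_gfun_succ (Finset.mem_Ico.mp hi).1, Nat.add_sub_cancel]

/-- For all integers `k > r ≥ 2` and real `x ∈ [0,1]`,
`g_r^r(x) - g_k^r(x) = ∑_{i=r}^{k-1} C(i, r-1) x^{i-r} (1-x)^r`. -/
theorem stmt_1 (r k : ℕ) (hr : 2 ≤ r) (hk : r < k) (x : ℝ)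
    (hx : x ∈ Set.Icc (0:ℝ) 1) :
    gfun r r x - gfun k r x
      = ∑ i ∈ Finset.Ico r k, (i.choose (r - 1) : ℝ) * x ^ (i - r) * (1 - x) ^ r :=
  stmt_1_general r k hr hk x
end

section
/- For all integers k ≥ r ≥ 2 and real x ∈ [0,1], g_k^r(x) ≤ g_r^r(x). -/
noncomputable def gterm (k : ℕ) (x : ℝ) (i : ℕ) : ℝ :=
  (k.choose i : ℝ) * x ^ (k - i - 1) * (1 - x) ^ i

theorem gfun_eq_sum_gterm (k r : ℕ) (x : ℝ) :
    gfun k r x = ∑ i ∈ Finset.range r, gterm k x i := rfl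

theorem gterm_nonneg (k i : ℕ) {x : ℝ} (hx : x ∈ Set.Icc (0 : ℝ) 1) : 0 ≤ gterm k x i := by
  obtain ⟨hx0, hx1⟩ := hx
  unfold gterm
  have : 0 ≤ 1 - x := sub_nonneg.mpr hx1
  positivity

theorem gterm_succ_zero {k : ℕ} (hk : 0 < k) (x : ℝ) : gterm (k + 1) x 0 = x * gterm k x 0 := by
  obtain ⟨m, rfl⟩ := Nat.exists_eq_add_of_lt hk
  simp only [gterm, Nat.choose_zero_right, Nat.sub_zero, Nat.add_sub_cancel, pow_zero]
  ring

/-- Pascal's rule for the summands, valid while the power of `x` does not hit the `0 - 1 = 0` junk value. -/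
theorem gterm_succ_succ {k i : ℕ} (hik : i + 1 < k) (x : ℝ) :
    gterm (k + 1) x (i + 1) = (1 - x) * gterm k x i + x * gterm k x (i + 1) := by
  obtain ⟨m, rfl⟩ := Nat.exists_eq_add_of_lt hik
  have e1 : i + 1 + m + 1 + 1 - (i + 1) - 1 = m + 1 := by omega
  have e2 : i + 1 + m + 1 - i - 1 = m + 1 := by omega
  have e3 : i + 1 + m + 1 - (i + 1) - 1 = m := by omega
  simp only [gterm, Nat.choose_succ_succ' (i + 1 + m + 1), Nat.cast_add, e1, e2, e3]
  ring

theorem gfun_succ_succ {k r : ℕ} (hrk : r + 1 ≤ k) (x : ℝ) :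
    gfun (k + 1) (r + 1) x = x * gfun k (r + 1) x + (1 - x) * gfun k r x := by
  simp only [gfun_eq_sum_gterm, Finset.sum_range_succ' (gterm (k + 1) x),
    Finset.sum_range_succ' (gterm k x) r, gterm_succ_zero (by omega : 0 < k)]
  rw [Finset.sum_congr rfl fun i hi => gterm_succ_succ (by simp at hi; omega) x,
    Finset.sum_add_distrib, ← Finset.mul_sum, ← Finset.mul_sum]
  ring

theorem gfun_succ_le {k r : ℕ} (hrk : r ≤ k) {x : ℝ} (hx : x ∈ Set.Icc (0 : ℝ) 1) :
    gfun (k + 1) r x ≤ gfun k r x := by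
  obtain _ | r := r
  · simp [gfun]
  have hstep : gfun (k + 1) (r + 1) x = gfun k (r + 1) x - (1 - x) * gterm k x r := by
    rw [gfun_succ_succ hrk, gfun_eq_sum_gterm k (r + 1), Finset.sum_range_succ,
      gfun_eq_sum_gterm]
    ring
  have : 0 ≤ (1 - x) * gterm k x r := mul_nonneg (sub_nonneg.mpr hx.2) (gterm_nonneg k r hx)
  linarith

theorem stmt_2_general (r k : ℕ) (hk : r ≤ k) (x : ℝ)
    (hx : x ∈ Set.Icc (0:ℝ) 1) :
    gfun k r x ≤ gfun r r x := by
  induction k, hk using Nat.le_induction with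
  | base => exact le_rfl
  | succ k hk ih => exact (gfun_succ_le hk hx).trans ih

/-- For all integers `k ≥ r ≥ 2` and real `x ∈ [0,1]`, `g_k^r(x) ≤ g_r^r(x)`. -/
theorem stmt_2 (r k : ℕ) (hr : 2 ≤ r) (hk : r ≤ k) (x : ℝ)
    (hx : x ∈ Set.Icc (0:ℝ) 1) :
    gfun k r x ≤ gfun r r x :=
  stmt_2_general r k hk x hx
end

section
/- For integers r ≥ 2, non-integer α ∈ (0, r-1) with t = ⌊α⌋, and real y ∈ (0,1], letting M = 1 + y + ⋯ + y^{r-1}: ∫_0^{1-y} (g_r^r(x) - M)/(1-x)^{2+α} dx ≥ y^{-α} ( 1/(α(α+1)) - y^α ∑_{i=0}^{t+1} 1/(α+1-i) ). -/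
/-!
Substituting `u = 1 - x` turns the integral into `∑_{i<r} ∫_y^1 (u^i - y^i) u^{-2-α} du`.
Every summand is nonnegative, so the terms with `i ≥ t + 2` can be dropped. Each remaining
summand has `s = α + 1 - i > 0` and equals `(y^{-s} - 1)/s - y^i (y^{-α-1} - 1)/(α + 1)`, which is
at least `y^{-s} (1/s - 1/(α + 1)) - 1/s ≥ -1/s`; for `i = 1` the first term is the
`y^{-α}/(α(α + 1))` of the bound.
-/

/-- `g_r^r(x) = ∑_{i=0}^{r-1} (1-x)^i`. -/
noncomputable def grr (r : ℕ) (x : ℝ) : ℝ := ∑ i ∈ Finset.range r, (1 - x) ^ i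

section

open Finset Real intervalIntegral

noncomputable def gapIntegral (α y : ℝ) (i : ℕ) : ℝ :=
  ∫ u in y..1, (u ^ i - y ^ i) / u ^ (2 + α)

variable {α y : ℝ}

lemma pos_of_mem_uIcc_one (hy : 0 < y) {u : ℝ} (hu : u ∈ Set.uIcc y 1) : 0 < u :=
  (lt_min hy one_pos).trans_le hu.1

lemma integral_eq_sum_gapIntegral (r : ℕ) (hy : 0 < y) :
    ∫ x in (0:ℝ)..(1 - y), (grr r x - ∑ i ∈ range r, y ^ i) / (1 - x) ^ (2 + α)
      = ∑ i ∈ range r, gapIntegral α y i := by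
  have hsub := integral_comp_sub_left
    (fun u => ((∑ i ∈ range r, u ^ i) - ∑ i ∈ range r, y ^ i) / u ^ (2 + α)) (a := 0) (b := 1 - y) 1
  rw [sub_sub_cancel, sub_zero] at hsub
  simp only [grr]
  rw [hsub]
  simp only [← sum_sub_distrib, sum_div]
  refine integral_finsetSum fun i _ => ContinuousOn.intervalIntegrable fun u hu => ?_
  have hu := pos_of_mem_uIcc_one hy hu
  apply ContinuousAt.continuousWithinAt
  exact (by fun_prop : ContinuousAt (fun x : ℝ => x ^ i - y ^ i) u).div
    (continuousAt_rpow_const u _ (.inl hu.ne')) (rpow_pos_of_pos hu _).ne'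

lemma integral_rpow_neg_sub_one (hy : 0 < y) {s : ℝ} (hs : s ≠ 0) :
    ∫ u in y..1, u ^ (-s - 1) = (y ^ (-s) - 1) / s := by
  have h0 : (0:ℝ) ∉ Set.uIcc y 1 := fun h => (pos_of_mem_uIcc_one hy h).false
  rw [integral_rpow (.inr ⟨by contrapose! hs; linarith, h0⟩), sub_add_cancel, one_rpow,
    div_neg, ← neg_div, neg_sub]

lemma gapIntegral_eq (hy : 0 < y) (i : ℕ) (hs : α + 1 - i ≠ 0) (hα : α + 1 ≠ 0) :
    gapIntegral α y i
      = (y ^ (-(α + 1 - i)) - 1) / (α + 1 - i) - y ^ i * ((y ^ (-(α + 1)) - 1) / (α + 1)) := by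
  have hcongr : Set.EqOn (fun u : ℝ => (u ^ i - y ^ i) / u ^ (2 + α))
      (fun u => u ^ (-(α + 1 - i) - 1) - y ^ i * u ^ (-(α + 1) - 1)) (Set.uIcc y 1) := by
    intro u hu
    have hu := pos_of_mem_uIcc_one hy hu
    have h1 : (i:ℝ) - (2 + α) = -(α + 1 - i) - 1 := by ring
    have h2 : -(2 + α) = -(α + 1) - 1 := by ring
    simp only
    rw [sub_div, div_eq_mul_inv (y ^ i), ← rpow_neg hu.le, ← rpow_natCast u i, ← rpow_sub hu, h1, h2]
  have hint : ∀ c : ℝ, IntervalIntegrable (fun u : ℝ => u ^ c) MeasureTheory.volume y 1 :=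
    fun c => ContinuousOn.intervalIntegrable fun u hu =>
      (continuousAt_rpow_const u c (.inl (pos_of_mem_uIcc_one hy hu).ne')).continuousWithinAt
  rw [gapIntegral, integral_congr hcongr, integral_sub (hint _) ((hint _).const_mul _),
    integral_const_mul, integral_rpow_neg_sub_one hy hs, integral_rpow_neg_sub_one hy hα]

lemma gapIntegral_ge (hy : 0 < y) (i : ℕ) (hs : 0 < α + 1 - i) :
    y ^ (-(α + 1 - i)) * (1 / (α + 1 - i) - 1 / (α + 1)) - 1 / (α + 1 - i)
      ≤ gapIntegral α y i := by
  have hα : 0 < α + 1 := hs.trans_le (by simp)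
  have hprod : y ^ i * y ^ (-(α + 1)) = y ^ (-(α + 1 - i)) := by
    rw [← rpow_natCast, ← rpow_add hy]; ring_nf
  have hyi : 0 ≤ y ^ i / (α + 1) := by positivity
  rw [gapIntegral_eq hy i hs.ne' hα.ne']
  linear_combination hyi + (1 / (α + 1)) * hprod

lemma gapIntegral_nonneg (hy₀ : 0 ≤ y) (hy₁ : y ≤ 1) (i : ℕ) : 0 ≤ gapIntegral α y i :=
  integral_nonneg hy₁ fun _ hu =>
    div_nonneg (sub_nonneg.2 (pow_le_pow_left₀ hy₀ hu.1 i)) (rpow_nonneg (hy₀.trans hu.1) _)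

lemma sum_gapIntegral_ge (hy : 0 < y) (hα : 0 < α) {t : ℕ} (ht : (t : ℝ) < α) :
    y ^ (-α) / (α * (α + 1)) - ∑ i ∈ range (t + 2), 1 / (α + 1 - i)
      ≤ ∑ i ∈ range (t + 2), gapIntegral α y i := by
  have hterm : ∀ i ∈ range (t + 2),
      (if i = 1 then y ^ (-α) / (α * (α + 1)) else 0) - 1 / (α + 1 - i) ≤ gapIntegral α y i := by
    intro i hi
    have hit : (i : ℝ) ≤ t + 1 := by exact_mod_cast Nat.lt_succ_iff.mp (mem_range.mp hi)
    have hs : 0 < α + 1 - i := by linarith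
    refine le_trans ?_ (gapIntegral_ge hy i hs)
    split_ifs with h1
    · subst h1
      rw [Nat.cast_one, add_sub_cancel_right]
      apply le_of_eq
      field_simp
      ring
    · have hle : 1 / (α + 1) ≤ 1 / (α + 1 - i) := one_div_le_one_div_of_le hs (by simp)
      have hgain := mul_nonneg (rpow_nonneg hy.le (-(α + 1 - i))) (sub_nonneg.2 hle)
      linarith
  calc _ = ∑ i ∈ range (t + 2),
        ((if i = 1 then y ^ (-α) / (α * (α + 1)) else 0) - 1 / (α + 1 - i)) := by
        rw [sum_sub_distrib, sum_ite_eq']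
        simp
    _ ≤ _ := sum_le_sum hterm

end

theorem stmt_7_general (r : ℕ) (α : ℝ) (hα0 : 0 < α) (hα1 : α < (r : ℝ) - 1)
    (hni : ∀ n : ℤ, (n : ℝ) ≠ α) (t : ℕ) (ht : (t : ℝ) = (⌊α⌋ : ℝ))
    (y : ℝ) (hy : y ∈ Set.Ioc (0:ℝ) 1) (M : ℝ) (hM : M = ∑ i ∈ Finset.range r, y ^ i) :
    (∫ x in (0:ℝ)..(1 - y), (grr r x - M) / (1 - x) ^ (2 + α))
      ≥ y ^ (-α) * (1 / (α * (α + 1)) - y ^ α * ∑ i ∈ Finset.range (t + 2), 1 / (α + 1 - i)) := by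
  obtain ⟨hy₀, hy₁⟩ := hy
  have htα : (t : ℝ) < α := ht ▸ (Int.floor_le α).lt_of_ne (hni ⌊α⌋)
  have htr : t + 2 ≤ r := by
    have : (t : ℝ) + 1 < r := by linarith
    exact_mod_cast this
  have hyα : y ^ (-α) * y ^ α = 1 := by rw [← Real.rpow_add hy₀, neg_add_cancel, Real.rpow_zero]
  rw [hM, integral_eq_sum_gapIntegral r hy₀, ge_iff_le]
  calc y ^ (-α) * (1 / (α * (α + 1)) - y ^ α * ∑ i ∈ Finset.range (t + 2), 1 / (α + 1 - i))
      = y ^ (-α) / (α * (α + 1)) - ∑ i ∈ Finset.range (t + 2), 1 / (α + 1 - i) := by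
        rw [mul_sub, ← mul_assoc, hyα, one_mul, mul_one_div]
    _ ≤ ∑ i ∈ Finset.range (t + 2), gapIntegral α y i := sum_gapIntegral_ge hy₀ hα0 htα
    _ ≤ ∑ i ∈ Finset.range r, gapIntegral α y i :=
        Finset.sum_le_sum_of_subset_of_nonneg (Finset.range_subset_range.2 htr)
          fun i _ _ => gapIntegral_nonneg hy₀.le hy₁ i

/-- For `r ≥ 2`, non-integer `α ∈ (0, r-1)` with `t = ⌊α⌋`, and `y ∈ (0,1]`, with
`M = 1 + y + ⋯ + y^{r-1}`:
`∫_0^{1-y} (g_r^r(x) - M)/(1-x)^{2+α} dx ≥ y^{-α} (1/(α(α+1)) - y^α ∑_{i=0}^{t+1} 1/(α+1-i))`. -/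
theorem stmt_7 (r : ℕ) (hr : 2 ≤ r) (α : ℝ) (hα0 : 0 < α) (hα1 : α < (r : ℝ) - 1)
    (hni : ∀ n : ℤ, (n : ℝ) ≠ α) (t : ℕ) (ht : (t : ℝ) = (⌊α⌋ : ℝ))
    (y : ℝ) (hy : y ∈ Set.Ioc (0:ℝ) 1) (M : ℝ) (hM : M = ∑ i ∈ Finset.range r, y ^ i) :
    (∫ x in (0:ℝ)..(1 - y), (grr r x - M) / (1 - x) ^ (2 + α))
      ≥ y ^ (-α) * (1 / (α * (α + 1)) - y ^ α * ∑ i ∈ Finset.range (t + 2), 1 / (α + 1 - i)) :=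
  stmt_7_general r α hα0 hα1 hni t ht y hy M hM
end

section
/- Let r ≥ 2 be an integer and ξ a probability distribution on integers ≥ r with E[ξ^r] < ∞. Define G_ξ^r(x) = ∑_{k≥r} P(ξ=k) g_k^r(x) where g_k^r(x) = ∑_{i=0}^{r-1} C(k,i) x^{k-i-1} (1-x)^i. Then for every t ∈ [0,1), G_ξ^r(1-t) ≥ (1 - t^r E[ξ^r]/r!)/(1-t). -/
open Finset

lemma sum_Ico_choose_mul_pow_le {k r : ℕ} (hrk : r ≤ k) {x t : ℝ} (hx : 0 ≤ x) (ht : 0 ≤ t) :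
    ∑ i ∈ Ico r (k + 1), (k.choose i : ℝ) * x ^ (k - i) * t ^ i
      ≤ k.choose r * t ^ r * (t + x) ^ (k - r) := by
  rw [sum_Ico_eq_sum_range, show k + 1 - r = k - r + 1 by omega, add_pow, mul_sum]
  refine sum_le_sum fun j hj => ?_
  have hjk : j ≤ k - r := Nat.lt_succ_iff.mp (mem_range.mp hj)
  have hchoose : (k.choose (r + j) : ℝ) ≤ k.choose r * (k - r).choose j := by
    have := Nat.choose_mul (n := k) (k := r + j) (s := r) (by omega)
    rw [Nat.add_sub_cancel_left] at this
    exact_mod_cast this ▸ Nat.le_mul_of_pos_right _ (Nat.choose_pos (by omega))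
  calc (k.choose (r + j) : ℝ) * x ^ (k - (r + j)) * t ^ (r + j)
      = k.choose (r + j) * (t ^ r * (t ^ j * x ^ (k - r - j))) := by
        rw [pow_add, show k - (r + j) = k - r - j by omega]; ring
    _ ≤ k.choose r * (k - r).choose j * (t ^ r * (t ^ j * x ^ (k - r - j))) := by
        gcongr
    _ = k.choose r * t ^ r * (t ^ j * x ^ (k - r - j) * (k - r).choose j) := by ring

lemma sum_choose_mul_pow_mul_pow_eq_one (k : ℕ) {x t : ℝ} (hxt : x + t = 1) :
    ∑ i ∈ range (k + 1), (k.choose i : ℝ) * x ^ (k - i) * t ^ i = 1 := by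
  have hbinom := add_pow t x k
  rw [add_comm, hxt, one_pow] at hbinom
  rw [hbinom]
  exact sum_congr rfl fun i _ => by ring

lemma mul_gfun_eq_sum {k r : ℕ} (hrk : r ≤ k) (x : ℝ) :
    x * gfun k r x = ∑ i ∈ range r, (k.choose i : ℝ) * x ^ (k - i) * (1 - x) ^ i := by
  rw [gfun, mul_sum]
  refine sum_congr rfl fun i hi => ?_
  have hpow : x ^ (k - i) = x * x ^ (k - i - 1) := by
    rw [← pow_succ']; congr 1; have := mem_range.mp hi; omega
  rw [hpow]
  ring

lemma mul_gfun_le_one {k r : ℕ} (hrk : r ≤ k) {x : ℝ} (hx0 : 0 ≤ x) (hx1 : x ≤ 1) :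
    x * gfun k r x ≤ 1 := by
  have hx1' : 0 ≤ 1 - x := sub_nonneg.mpr hx1
  calc x * gfun k r x
      ≤ ∑ i ∈ range (k + 1), (k.choose i : ℝ) * x ^ (k - i) * (1 - x) ^ i := by
        rw [mul_gfun_eq_sum hrk]
        exact sum_le_sum_of_subset_of_nonneg (range_subset_range.mpr (by omega))
          fun _ _ _ => by positivity
    _ = 1 := sum_choose_mul_pow_mul_pow_eq_one k (add_sub_cancel x 1)

lemma one_sub_le_mul_gfun {k r : ℕ} (hrk : r ≤ k) {t : ℝ} (ht0 : 0 ≤ t) (ht1 : t ≤ 1) :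
    1 - t ^ r * (k : ℝ) ^ r / r.factorial ≤ (1 - t) * gfun k r (1 - t) := by
  have hx : 0 ≤ 1 - t := sub_nonneg.mpr ht1
  have hbinom := sum_choose_mul_pow_mul_pow_eq_one k (sub_add_cancel 1 t)
  have htail := sum_Ico_choose_mul_pow_le hrk hx ht0
  rw [add_sub_cancel, one_pow, mul_one] at htail
  have hchoose : (k.choose r : ℝ) * t ^ r ≤ t ^ r * (k : ℝ) ^ r / r.factorial := by
    calc (k.choose r : ℝ) * t ^ r ≤ (k : ℝ) ^ r / r.factorial * t ^ r :=
          mul_le_mul_of_nonneg_right (Nat.choose_le_pow_div r k) (pow_nonneg ht0 r)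
      _ = _ := by ring
  rw [mul_gfun_eq_sum hrk, sub_sub_cancel]
  rw [← sum_range_add_sum_Ico _ (by omega : r ≤ k + 1)] at hbinom
  linarith

lemma gfun_nonneg (k r : ℕ) {x : ℝ} (hx0 : 0 ≤ x) (hx1 : x ≤ 1) : 0 ≤ gfun k r x := by
  have : 0 ≤ 1 - x := sub_nonneg.mpr hx1
  exact sum_nonneg fun i _ => by positivity

lemma summable_of_tsum_ne_zero {α M : Type*} [AddCommMonoid M] [TopologicalSpace M] {f : α → M}
    (hf : ∑' a, f a ≠ 0) : Summable f :=
  by_contra fun h => hf (tsum_eq_zero_of_not_summable h)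

theorem stmt_11_general (r : ℕ) (p : ℕ → ℝ)
    (hp0 : ∀ k, 0 ≤ p k) (hpsupp : ∀ k, k < r → p k = 0) (hp1 : ∑' k, p k = 1)
    (hmom : Summable fun k => p k * (k : ℝ) ^ r)
    (t : ℝ) (ht : t ∈ Set.Ico (0:ℝ) 1) :
    (∑' k, p k * gfun k r (1 - t))
      ≥ (1 - t ^ r * (∑' k, p k * (k : ℝ) ^ r) / (r.factorial : ℝ)) / (1 - t) := by
  obtain ⟨ht0, ht1⟩ := ht
  have hx : 0 < 1 - t := sub_pos.mpr ht1
  have hp : Summable p := summable_of_tsum_ne_zero (hp1 ▸ one_ne_zero)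
  have hterm : ∀ k, p k - t ^ r / r.factorial * (p k * (k : ℝ) ^ r)
      ≤ (1 - t) * (p k * gfun k r (1 - t)) ∧ (1 - t) * (p k * gfun k r (1 - t)) ≤ p k := by
    intro k
    rcases lt_or_ge k r with hk | hk
    · simp [hpsupp k hk]
    have hpk := hp0 k
    have hg := mul_gfun_le_one hk hx.le (by linarith)
    constructor
    · calc p k - t ^ r / r.factorial * (p k * (k : ℝ) ^ r)
          = p k * (1 - t ^ r * (k : ℝ) ^ r / r.factorial) := by ring
        _ ≤ p k * ((1 - t) * gfun k r (1 - t)) := by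
          gcongr; exact one_sub_le_mul_gfun hk ht0 ht1.le
        _ = _ := by ring
    · linarith [mul_le_mul_of_nonneg_left hg hpk]
  have hG : Summable fun k => (1 - t) * (p k * gfun k r (1 - t)) :=
    hp.of_nonneg_of_le
      (fun k => mul_nonneg hx.le (mul_nonneg (hp0 k) (gfun_nonneg k r hx.le (by linarith))))
      fun k => (hterm k).2
  have hsum := (hp.sub (hmom.mul_left _)).tsum_le_tsum (fun k => (hterm k).1) hG
  rw [hp.tsum_sub (hmom.mul_left _), hp1, tsum_mul_left, tsum_mul_left] at hsum
  rw [ge_iff_le, div_le_iff₀ hx]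
  convert hsum using 1 <;> ring

/-- For `r ≥ 2` and a probability distribution `p` on the integers `≥ r` with finite `r`-th
moment, `G_ξ^r(1-t) = ∑_{k≥r} P(ξ=k) g_k^r(1-t) ≥ (1 - t^r E[ξ^r]/r!)/(1-t)` for `t ∈ [0,1)`. -/
theorem stmt_11 (r : ℕ) (hr : 2 ≤ r) (p : ℕ → ℝ)
    (hp0 : ∀ k, 0 ≤ p k) (hpsupp : ∀ k, k < r → p k = 0) (hp1 : ∑' k, p k = 1)
    (hmom : Summable fun k => p k * (k : ℝ) ^ r)
    (t : ℝ) (ht : t ∈ Set.Ico (0:ℝ) 1) :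
    (∑' k, p k * gfun k r (1 - t))
      ≥ (1 - t ^ r * (∑' k, p k * (k : ℝ) ^ r) / (r.factorial : ℝ)) / (1 - t) :=
  stmt_11_general r p hp0 hpsupp hp1 hmom t ht
end
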